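/- Every subset of the natural numbers that is denser than lacunaries is not an I₀ set. -/

import Mathlib

/-- A sequence `ψ : ℕ → ℂ` is almost periodic if it is a uniform limit of
trigonometric polynomials. -/
def AlmostPeriodic (ψ : ℕ → ℂ) : Prop :=
  ∀ ε : ℝ, 0 < ε → ∃ (m : ℕ) (c : Fin m → ℂ) (α : Fin m → ℝ),
    ∀ n : ℕ, ‖ψ n - ∑ j, c j * Complex.exp (2 * (Real.pi : ℂ) * Complex.I * (n : ℂ) * (α j : ℂ))‖ < ε

/-- A set `E ⊆ ℕ` is an `I₀` set if every bounded function on `E` extends to an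
almost periodic sequence on `ℕ`. -/
def IsI0Set (E : Set ℕ) : Prop :=
  ∀ b : ℕ → ℂ, (∃ C : ℝ, ∀ n ∈ E, ‖b n‖ ≤ C) →
    ∃ ψ : ℕ → ℂ, AlmostPeriodic ψ ∧ ∀ r ∈ E, ψ r = b r

/-- A strictly increasing sequence of positive integers is lacunary if
`inf_n s (n+1) / s n > 1`. -/
def Lacunary (s : ℕ → ℕ) : Prop :=
  StrictMono s ∧ (∀ n, 0 < s n) ∧ ∃ q : ℝ, 1 < q ∧ ∀ n, q * (s n : ℝ) ≤ (s (n + 1) : ℝ)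

/-- A strictly increasing sequence `r` is denser than lacunaries if
`r n / s n → 0` for every lacunary sequence `s`. -/
def DenserThanLacunaries (r : ℕ → ℕ) : Prop :=
  StrictMono r ∧ ∀ s : ℕ → ℕ, Lacunary s →
    Filter.Tendsto (fun n => (r n : ℝ) / (s n : ℝ)) Filter.atTop (nhds 0)

/-!
If `range r` were an `I₀` set, every `±1` pattern along `r` would be `1/2`-close to a
trigonometric polynomial. The patterns approximable with `m` frequencies in `[0, 1]` and
coefficients bounded by `C` form closed subsets of the Cantor space `ℕ → Bool`, so by Baire one
of them contains a whole cylinder `{b | b i = x i for i < K}`: the signs on any window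
`K ≤ i < K + N` can then be prescribed freely.

A set denser than lacunaries grows subexponentially. Hoeffding's inequality and a union bound
over a net of `[0, 1]` therefore give, for `N` large, signs `ε` on the window with
`‖∑ ε_i e(r_i t)‖ ≤ δ N` for all `t`. Pairing the approximating polynomial
`∑ c_l e(n α_l)` with these signs yields `N / 2 ≤ ∑ ‖c_l‖ ‖∑ ε_i e(r_i α_l)‖ ≤ m C δ N`,
which fails for small `δ`.
-/

open Filter Finset Real Asymptotics

noncomputable def boolSign (b : Bool) : ℝ := if b then 1 else -1

noncomputable def expFreq (k : ℕ) (t : ℝ) : ℂ :=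
  Complex.exp (2 * π * Complex.I * k * t)

section SignedSums

variable {ι : Type*} [Fintype ι] [DecidableEq ι]

lemma boolSign_sq (b : Bool) : boolSign b ^ 2 = 1 := by
  cases b <;> norm_num [boolSign]

lemma abs_boolSign (b : Bool) : |boolSign b| = 1 := by
  cases b <;> norm_num [boolSign]

lemma sum_exp_mul_signedSum_le (a : ι → ℝ) (ha : ∀ j, |a j| ≤ 1) (s : ℝ) :
    ∑ b : ι → Bool, exp (s * ∑ j, boolSign (b j) * a j)
      ≤ (2 * exp (s ^ 2 / 2)) ^ Fintype.card ι := by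
  calc ∑ b : ι → Bool, exp (s * ∑ j, boolSign (b j) * a j)
      = ∏ j, ∑ v : Bool, exp (s * (boolSign v * a j)) := by
        rw [Fintype.prod_sum]
        simp only [mul_sum, exp_sum]
    _ = ∏ j, 2 * cosh (s * a j) := by
        refine prod_congr rfl fun j _ => ?_
        simp [boolSign, cosh_eq, mul_div_cancel₀]
    _ ≤ ∏ _j : ι, 2 * exp (s ^ 2 / 2) := by
        refine prod_le_prod (fun j _ => by positivity) fun j _ => ?_
        have hsq : (s * a j) ^ 2 ≤ s ^ 2 := by
          rw [mul_pow, ← sq_abs (a j)]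
          exact mul_le_of_le_one_right (sq_nonneg s) (pow_le_one₀ (abs_nonneg _) (ha j))
        gcongr
        exact (cosh_le_exp_half_sq _).trans (exp_le_exp.2 (by linarith))
    _ = (2 * exp (s ^ 2 / 2)) ^ Fintype.card ι := by rw [prod_const, card_univ]

lemma card_signedSum_ge_mul_exp_pow_le (a : ι → ℝ) (ha : ∀ j, |a j| ≤ 1) {s : ℝ}
    (hs : 0 ≤ s) :
    #{b : ι → Bool | s * Fintype.card ι ≤ ∑ j, boolSign (b j) * a j}
      * exp (s ^ 2 / 2) ^ Fintype.card ι ≤ 2 ^ Fintype.card ι := by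
  set N := Fintype.card ι
  set E := exp (s ^ 2 / 2)
  have hmarkov : #{b : ι → Bool | s * N ≤ ∑ j, boolSign (b j) * a j} * E ^ N * E ^ N
      ≤ 2 ^ N * E ^ N :=
    calc #{b : ι → Bool | s * N ≤ ∑ j, boolSign (b j) * a j} * E ^ N * E ^ N
        = ∑ b : ι → Bool with s * N ≤ ∑ j, boolSign (b j) * a j, exp (s * (s * N)) := by
          rw [sum_const, nsmul_eq_mul, mul_assoc, ← mul_pow, ← exp_add, ← exp_nat_mul]
          ring_nf
      _ ≤ ∑ b : ι → Bool with s * N ≤ ∑ j, boolSign (b j) * a j,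
            exp (s * ∑ j, boolSign (b j) * a j) :=
          sum_le_sum fun b hb =>
            exp_le_exp.2 (mul_le_mul_of_nonneg_left (mem_filter.1 hb).2 hs)
      _ ≤ ∑ b : ι → Bool, exp (s * ∑ j, boolSign (b j) * a j) :=
          sum_le_sum_of_subset_of_nonneg (filter_subset _ _) fun _ _ _ => (exp_pos _).le
      _ ≤ 2 ^ N * E ^ N := (sum_exp_mul_signedSum_le a ha s).trans_eq (mul_pow _ _ _)
  exact le_of_mul_le_mul_right hmarkov (by positivity)

lemma card_abs_signedSum_ge_mul_exp_pow_le (a : ι → ℝ) (ha : ∀ j, |a j| ≤ 1) {s : ℝ}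
    (hs : 0 ≤ s) :
    #{b : ι → Bool | s * Fintype.card ι ≤ |∑ j, boolSign (b j) * a j|}
      * exp (s ^ 2 / 2) ^ Fintype.card ι ≤ 2 * 2 ^ Fintype.card ι := by
  have hneg := card_signedSum_ge_mul_exp_pow_le (-a) (by simpa using ha) hs
  simp only [Pi.neg_apply, mul_neg, sum_neg_distrib] at hneg
  have hsplit : #{b : ι → Bool | s * Fintype.card ι ≤ |∑ j, boolSign (b j) * a j|}
      ≤ #{b : ι → Bool | s * Fintype.card ι ≤ ∑ j, boolSign (b j) * a j}
        + #{b : ι → Bool | s * Fintype.card ι ≤ -∑ j, boolSign (b j) * a j} := by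
    simp_rw [le_abs, filter_or]
    exact card_union_le _ _
  have := mul_le_mul_of_nonneg_right (Nat.cast_le (α := ℝ) |>.2 hsplit)
    (by positivity : 0 ≤ exp (s ^ 2 / 2) ^ Fintype.card ι)
  push_cast at this
  linarith [card_signedSum_ge_mul_exp_pow_le a ha hs]

lemma card_norm_signedSum_ge_mul_exp_pow_le (z : ι → ℂ) (hz : ∀ j, ‖z j‖ ≤ 1) {s : ℝ}
    (hs : 0 ≤ s) :
    #{b : ι → Bool | 2 * s * Fintype.card ι ≤ ‖∑ j, (boolSign (b j) : ℂ) * z j‖}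
      * exp (s ^ 2 / 2) ^ Fintype.card ι ≤ 4 * 2 ^ Fintype.card ι := by
  have hsplit
      : #{b : ι → Bool | 2 * s * Fintype.card ι ≤ ‖∑ j, (boolSign (b j) : ℂ) * z j‖}
      ≤ #{b : ι → Bool | s * Fintype.card ι ≤ |∑ j, boolSign (b j) * (z j).re|}
        + #{b : ι → Bool | s * Fintype.card ι ≤ |∑ j, boolSign (b j) * (z j).im|} := by
    refine le_trans ?_ (card_union_le _ _)
    rw [← filter_or]
    refine card_le_card (monotone_filter_right _ fun b _ hb => ?_)
    have := (Complex.norm_le_abs_re_add_abs_im (∑ j, (boolSign (b j) : ℂ) * z j)).trans' hb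
    simp only [Complex.re_sum, Complex.im_sum, Complex.re_ofReal_mul,
      Complex.im_ofReal_mul] at this
    by_contra! h
    linarith [h.1, h.2]
  have := mul_le_mul_of_nonneg_right (Nat.cast_le (α := ℝ) |>.2 hsplit)
    (by positivity : 0 ≤ exp (s ^ 2 / 2) ^ Fintype.card ι)
  push_cast at this
  linarith [card_abs_signedSum_ge_mul_exp_pow_le (fun j => (z j).re)
      (fun j => (Complex.abs_re_le_norm _).trans (hz j)) hs,
    card_abs_signedSum_ge_mul_exp_pow_le (fun j => (z j).im)
      (fun j => (Complex.abs_im_le_norm _).trans (hz j)) hs]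

lemma exists_signs_forall_mem_norm_signedSum_lt {κ : Type*} (P : Finset κ) (z : κ → ι → ℂ)
    (hz : ∀ k j, ‖z k j‖ ≤ 1) {s : ℝ} (hs : 0 ≤ s)
    (hP : 4 * #P < exp (s ^ 2 / 2) ^ Fintype.card ι) :
    ∃ b : ι → Bool, ∀ k ∈ P,
      ‖∑ j, (boolSign (b j) : ℂ) * z k j‖ < 2 * s * Fintype.card ι := by
  set N := Fintype.card ι
  set E := exp (s ^ 2 / 2)
  set bad : κ → Finset (ι → Bool) :=
    fun k => {b | 2 * s * N ≤ ‖∑ j, (boolSign (b j) : ℂ) * z k j‖}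
  by_contra! h
  have hcover : (univ : Finset (ι → Bool)) ⊆ P.biUnion bad := fun b _ => by
    obtain ⟨k, hk, hb⟩ := h b
    exact mem_biUnion.2 ⟨k, hk, by simpa [bad] using hb⟩
  have hcard : (2 : ℝ) ^ N ≤ ∑ k ∈ P, (#(bad k) : ℝ) := by
    have := (card_le_card hcover).trans card_biUnion_le
    rw [card_univ, Fintype.card_fun, Fintype.card_bool] at this
    exact_mod_cast this
  have key : (2 : ℝ) ^ N * E ^ N < E ^ N * 2 ^ N :=
    calc (2 : ℝ) ^ N * E ^ N ≤ ∑ k ∈ P, #(bad k) * E ^ N := by rw [← sum_mul]; gcongr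
      _ ≤ ∑ _k ∈ P, 4 * (2 : ℝ) ^ N :=
          sum_le_sum fun k _ => card_norm_signedSum_ge_mul_exp_pow_le _ (hz k) hs
      _ = 4 * #P * 2 ^ N := by rw [sum_const, nsmul_eq_mul]; ring
      _ < E ^ N * 2 ^ N := by gcongr
  linarith

end SignedSums

section ExpFreq

lemma norm_expFreq (k : ℕ) (t : ℝ) : ‖expFreq k t‖ = 1 := by
  rw [expFreq, Complex.norm_exp]
  simp

lemma expFreq_fract (k : ℕ) (t : ℝ) : expFreq k (Int.fract t) = expFreq k t := by
  rw [expFreq, expFreq, Int.fract, Complex.ofReal_sub, mul_sub, Complex.exp_sub,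
    Complex.ofReal_intCast,
    show (2 * π * Complex.I * k * ⌊t⌋ : ℂ) = (k * ⌊t⌋ : ℤ) * (2 * π * Complex.I) by
      push_cast; ring,
    Complex.exp_int_mul_two_pi_mul_I, div_one]

lemma norm_expFreq_sub_le (k : ℕ) (t t' : ℝ) :
    ‖expFreq k t - expFreq k t'‖ ≤ 2 * π * k * |t - t'| := by
  have hfactor : expFreq k t - expFreq k t'
      = expFreq k t' * (Complex.exp (Complex.I * ↑(2 * π * k * (t - t'))) - 1) := by
    rw [mul_sub, mul_one, expFreq, expFreq, ← Complex.exp_add]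
    push_cast
    ring_nf
  rw [hfactor, norm_mul, norm_expFreq, one_mul]
  refine norm_exp_I_mul_ofReal_sub_one_le.trans_eq ?_
  rw [Real.norm_eq_abs, abs_mul, abs_of_nonneg (by positivity)]

lemma continuous_expFreq (k : ℕ) : Continuous (expFreq k) := by
  unfold expFreq
  fun_prop

end ExpFreq

section FlatSignedSums

variable {ι : Type*} [Fintype ι]

lemma norm_sum_expFreq_sub_le (b : ι → Bool) (f : ι → ℕ) {D : ℕ} (hf : ∀ j, f j ≤ D)
    (t t' : ℝ) :
    ‖∑ j, (boolSign (b j) : ℂ) * expFreq (f j) t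
      - ∑ j, (boolSign (b j) : ℂ) * expFreq (f j) t'‖
      ≤ Fintype.card ι * (2 * π * D * |t - t'|) := by
  rw [← sum_sub_distrib]
  refine (norm_sum_le _ _).trans ?_
  calc ∑ j, ‖(boolSign (b j) : ℂ) * expFreq (f j) t - boolSign (b j) * expFreq (f j) t'‖
      ≤ ∑ _j : ι, 2 * π * D * |t - t'| := sum_le_sum fun j _ => ?_
    _ = Fintype.card ι * (2 * π * D * |t - t'|) := by rw [sum_const, card_univ, nsmul_eq_mul]
  rw [← mul_sub, norm_mul, Complex.norm_real, Real.norm_eq_abs, abs_boolSign, one_mul]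
  refine (norm_expFreq_sub_le _ _ _).trans ?_
  gcongr
  exact_mod_cast hf j

theorem exists_signs_norm_sum_expFreq_le [DecidableEq ι] (f : ι → ℕ) {D : ℕ}
    (hf : ∀ j, f j ≤ D) (hD : 1 ≤ D) {δ : ℝ} (hδ : 0 < δ)
    (h : 4 * (4 * π / δ + 2) * D < exp (δ ^ 2 / 32) ^ Fintype.card ι) :
    ∃ b : ι → Bool, ∀ t ∈ Set.Icc (0 : ℝ) 1,
      ‖∑ j, (boolSign (b j) : ℂ) * expFreq (f j) t‖ ≤ δ * Fintype.card ι := by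
  set N := Fintype.card ι
  set T := ⌈4 * π * D / δ⌉₊
  have hD' : (1 : ℝ) ≤ D := by exact_mod_cast hD
  have hTD : 4 * π * D ≤ δ * T := by
    rw [← div_le_iff₀' hδ]
    exact Nat.le_ceil _
  have hT : (0 : ℝ) < T := by
    have : 0 < 4 * π * D := by positivity
    nlinarith
  -- union bound over the net `k / T`, `k ≤ T`, whose mesh `1 / T` suits frequencies `≤ D`
  have hP : 4 * #(range (T + 1)) < exp ((δ / 4) ^ 2 / 2) ^ N := by
    have hT' : (T : ℝ) < 4 * π * D / δ + 1 := Nat.ceil_lt_add_one (by positivity)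
    calc (4 * #(range (T + 1)) : ℝ) = 4 * (T + 1) := by rw [card_range]; push_cast; ring
      _ ≤ 4 * (4 * π / δ + 2) * D := by
          rw [mul_div_right_comm] at hT'
          nlinarith
      _ < _ := by convert h using 3; ring
  obtain ⟨b, hb⟩ := exists_signs_forall_mem_norm_signedSum_lt (range (T + 1))
    (fun k j => expFreq (f j) (k / T)) (fun _ _ => (norm_expFreq _ _).le) (by positivity) hP
  refine ⟨b, fun t ⟨ht0, ht1⟩ => ?_⟩
  set k := ⌊t * T⌋₊
  have hk : k ∈ range (T + 1) :=
    mem_range.2 (Nat.lt_succ_of_le (Nat.floor_le_of_le (by nlinarith)))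
  have hdist : 2 * π * D * |t - k / T| ≤ δ / 2 := by
    have h0 : (k : ℝ) ≤ t * T := Nat.floor_le (by positivity)
    have h1 : t * T < k + 1 := Nat.lt_floor_add_one _
    have hsub : t - k / T = (t * T - k) / T := by field_simp
    rw [hsub, abs_of_nonneg (div_nonneg (by linarith) hT.le)]
    calc 2 * π * D * ((t * T - k) / T) ≤ 2 * π * D * (1 / T) := by gcongr; linarith
      _ ≤ δ / 2 := by rw [mul_one_div, div_le_iff₀ hT]; linarith
  calc ‖∑ j, (boolSign (b j) : ℂ) * expFreq (f j) t‖
      ≤ ‖∑ j, (boolSign (b j) : ℂ) * expFreq (f j) (k / T)‖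
        + ‖∑ j, (boolSign (b j) : ℂ) * expFreq (f j) t
          - ∑ j, (boolSign (b j) : ℂ) * expFreq (f j) (k / T)‖ :=
          norm_le_norm_add_norm_sub' _ _
    _ ≤ 2 * (δ / 4) * N + N * (δ / 2) := by
        gcongr
        · exact (hb k hk).le
        · exact (norm_sum_expFreq_sub_le b f hf _ _).trans (by gcongr)
    _ = δ * N := by ring

end FlatSignedSums

section Growth

lemma exists_lacunary_isBigO_pow {ρ : ℝ} (hρ : 1 < ρ) :
    ∃ s : ℕ → ℕ, Lacunary s ∧ (fun n => (s n : ℝ)) =O[atTop] (ρ ^ ·) := by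
  -- `A (ρ - q) = q` absorbs the rounding in `⌈A ρ ^ n⌉₊`
  set A := (1 + ρ) / (ρ - 1)
  set q := (1 + ρ) / 2
  have hA : 0 < A := div_pos (by linarith) (by linarith)
  have hq : 1 < q := by simp only [q]; linarith
  have hAq : A * (ρ - q) = q := by
    simp only [A, q]
    field_simp [(by linarith : ρ - 1 ≠ 0)]
    ring
  set s : ℕ → ℕ := fun n => ⌈A * ρ ^ n⌉₊
  have hpos : ∀ n, 0 < s n := fun n => Nat.ceil_pos.2 (by positivity)
  have hs_lt : ∀ n, (s n : ℝ) < A * ρ ^ n + 1 := fun n => Nat.ceil_lt_add_one (by positivity)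
  have hratio : ∀ n, q * (s n : ℝ) ≤ s (n + 1) := by
    intro n
    have h1 : 1 ≤ ρ ^ n := one_le_pow₀ hρ.le
    calc q * (s n : ℝ) ≤ q * (A * ρ ^ n + 1) := by gcongr; exact (hs_lt n).le
      _ ≤ q * (A * ρ ^ n) + A * (ρ - q) * ρ ^ n := by rw [hAq]; nlinarith
      _ = A * ρ ^ (n + 1) := by ring
      _ ≤ s (n + 1) := Nat.le_ceil _
  refine ⟨s, ⟨strictMono_nat_of_lt_succ fun n => ?_, hpos, q, hq, hratio⟩, ?_⟩
  · have hsn : (0 : ℝ) < s n := by exact_mod_cast hpos n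
    exact_mod_cast (lt_mul_of_one_lt_left hsn hq).trans_le (hratio n)
  · refine IsBigO.of_bound (A + 1) (Eventually.of_forall fun n => ?_)
    rw [Real.norm_natCast, norm_pow, Real.norm_eq_abs, abs_of_pos (by linarith)]
    nlinarith [hs_lt n, one_le_pow₀ (n := n) hρ.le]

lemma DenserThanLacunaries.isLittleO_pow {r : ℕ → ℕ} (hr : DenserThanLacunaries r) {ρ : ℝ}
    (hρ : 1 < ρ) : (fun n => (r n : ℝ)) =o[atTop] (ρ ^ ·) := by
  obtain ⟨s, hs, hsρ⟩ := exists_lacunary_isBigO_pow hρ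
  have hs0 : ∀ n, (s n : ℝ) ≠ 0 := fun n => by exact_mod_cast (hs.2.1 n).ne'
  exact ((isLittleO_iff_tendsto' (Eventually.of_forall fun n hn => absurd hn (hs0 n))).2
    (hr.2 s hs)).trans_isBigO hsρ

lemma DenserThanLacunaries.eventually_mul_lt_pow {r : ℕ → ℕ} (hr : DenserThanLacunaries r)
    (K : ℕ) (L : ℝ) {ρ : ℝ} (hρ : 1 < ρ) : ∀ᶠ N in atTop, L * r (N + K) < ρ ^ N := by
  have hshift : (fun N => (r (N + K) : ℝ)) =o[atTop] (ρ ^ ·) :=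
    ((hr.isLittleO_pow hρ).comp_tendsto (tendsto_add_atTop_nat K)).trans_isBigO
      (by
        simp only [Function.comp_def, pow_add, mul_comm _ (ρ ^ K)]
        exact isBigO_const_mul_self (ρ ^ K) (ρ ^ ·) atTop)
  have hlim := hshift.tendsto_div_nhds_zero.const_mul L
  rw [mul_zero] at hlim
  filter_upwards [hlim.eventually (gt_mem_nhds one_pos)] with N hN
  rwa [mul_div_assoc', div_lt_one (by positivity)] at hN

end Growth

section SignApproximation

-- frequencies are normalized to `[0, 1]` by periodicity, to make the parameter space compact
def signApproxSet (r : ℕ → ℕ) (m C : ℕ) : Set (ℕ → Bool) :=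
  {b | ∃ c : Fin m → ℂ, ∃ α : Fin m → ℝ, ‖c‖ ≤ C ∧ α ∈ Set.Icc 0 1 ∧
    ∀ n, ‖(boolSign (b n) : ℂ) - ∑ j, c j * expFreq (r n) (α j)‖ ≤ 1 / 2}

lemma isClosed_signApproxSet (r : ℕ → ℕ) (m C : ℕ) : IsClosed (signApproxSet r m C) := by
  set P := Metric.closedBall (0 : Fin m → ℂ) C ×ˢ Set.Icc (0 : Fin m → ℝ) 1
  have : CompactSpace P :=
    isCompact_iff_compactSpace.1 ((isCompact_closedBall _ _).prod isCompact_Icc)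
  set S : Set (P × (ℕ → Bool)) := {p | ∀ n,
    ‖(boolSign (p.2 n) : ℂ) - ∑ j, p.1.1.1 j * expFreq (r n) (p.1.1.2 j)‖ ≤ 1 / 2}
  have hS : IsClosed S := by
    simp only [S, Set.ofPred_forall]
    refine isClosed_iInter fun n => isClosed_le ?_ continuous_const
    have hsign : Continuous fun p : P × (ℕ → Bool) => (boolSign (p.2 n) : ℂ) :=
      (continuous_of_discreteTopology (f := fun v : Bool => (boolSign v : ℂ))).comp
        ((continuous_apply n).comp continuous_snd)
    have := continuous_expFreq (r n)
    fun_prop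
  have hproj : signApproxSet r m C = Prod.snd '' S := by
    ext b
    constructor
    · rintro ⟨c, α, hc, hα, hb⟩
      exact ⟨(⟨(c, α), mem_closedBall_zero_iff.2 hc, hα⟩, b), hb, rfl⟩
    · rintro ⟨⟨⟨⟨c, α⟩, hc, hα⟩, b⟩, hb, rfl⟩
      exact ⟨c, α, mem_closedBall_zero_iff.1 hc, hα, hb⟩
  rw [hproj]
  exact isClosedMap_snd_of_compactSpace _ hS

lemma IsI0Set.iUnion_signApproxSet_eq_univ {r : ℕ → ℕ} (hr : Function.Injective r)
    (h : IsI0Set (Set.range r)) : ⋃ mC : ℕ × ℕ, signApproxSet r mC.1 mC.2 = Set.univ := by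
  refine Set.eq_univ_of_forall fun b => ?_
  obtain ⟨ψ, hψ, hψb⟩ := h (fun k => boolSign (b (Function.invFun r k)))
    ⟨1, fun k _ => by rw [Complex.norm_real, Real.norm_eq_abs, abs_boolSign]⟩
  obtain ⟨m, c, α, hcα⟩ := hψ (1 / 2) one_half_pos
  refine Set.mem_iUnion.2 ⟨(m, ⌈‖c‖⌉₊), c, fun j => Int.fract (α j), Nat.le_ceil _,
    ⟨fun j => Int.fract_nonneg _, fun j => (Int.fract_lt_one _).le⟩, fun n => ?_⟩
  have := hcα (r n)
  rw [hψb _ ⟨n, rfl⟩, Function.leftInverse_invFun hr n] at this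
  simp only [expFreq_fract]
  exact this.le

lemma IsI0Set.exists_cylinder_subset_signApproxSet {r : ℕ → ℕ} (hr : Function.Injective r)
    (h : IsI0Set (Set.range r)) :
    ∃ (m C : ℕ) (x : ℕ → Bool) (K : ℕ), PiNat.cylinder x K ⊆ signApproxSet r m C := by
  obtain ⟨⟨m, C⟩, b₀, hb₀⟩ := nonempty_interior_of_iUnion_of_closed
    (fun mC : ℕ × ℕ => isClosed_signApproxSet r mC.1 mC.2) (h.iUnion_signApproxSet_eq_univ hr)
  obtain ⟨_, ⟨x, K, rfl⟩, -, hsub⟩ :=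
    (PiNat.isTopologicalBasis_cylinders fun _ => Bool).mem_nhds_iff.1
      (isOpen_interior.mem_nhds hb₀)
  exact ⟨m, C, x, K, hsub.trans interior_subset⟩

end SignApproximation

lemma card_le_of_forall_norm_boolSign_sub_le {ι : Type*} [Fintype ι] (ε : ι → Bool)
    (f : ι → ℕ) {m : ℕ} (c : Fin m → ℂ) (α : Fin m → ℝ) {C B : ℝ}
    (hc : ∀ l, ‖c l‖ ≤ C)
    (hB : ∀ l, ‖∑ j, (boolSign (ε j) : ℂ) * expFreq (f j) (α l)‖ ≤ B)
    (h : ∀ j, ‖(boolSign (ε j) : ℂ) - ∑ l, c l * expFreq (f j) (α l)‖ ≤ 1 / 2) :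
    (Fintype.card ι : ℝ) ≤ 2 * (m * (C * B)) := by
  have hterm : ∀ j,
      1 / 2 ≤ ((boolSign (ε j) : ℂ) * ∑ l, c l * expFreq (f j) (α l)).re := by
    intro j
    set σ : ℂ := ((boolSign (ε j) : ℝ) : ℂ)
    set P := ∑ l, c l * expFreq (f j) (α l)
    have hσ : ‖σ‖ = 1 := by rw [Complex.norm_real, Real.norm_eq_abs, abs_boolSign]
    have hσP : σ * P = 1 - σ * (σ - P) := by
      have : σ ^ 2 = 1 := by rw [← Complex.ofReal_pow, boolSign_sq, Complex.ofReal_one]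
      linear_combination this
    have := Complex.re_le_norm (σ * (σ - P))
    rw [norm_mul, hσ, one_mul] at this
    rw [hσP, Complex.sub_re, Complex.one_re]
    linarith [h j]
  have hswap : ∑ j, (boolSign (ε j) : ℂ) * ∑ l, c l * expFreq (f j) (α l)
      = ∑ l, c l * ∑ j, (boolSign (ε j) : ℂ) * expFreq (f j) (α l) := by
    simp_rw [mul_sum]
    rw [sum_comm]
    exact sum_congr rfl fun l _ => sum_congr rfl fun j _ => by ring
  calc (Fintype.card ι : ℝ) = 2 * ∑ _j : ι, (1 / 2 : ℝ) := by
        rw [sum_const, card_univ, nsmul_eq_mul]; ring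
    _ ≤ 2 * (∑ j, (boolSign (ε j) : ℂ) * ∑ l, c l * expFreq (f j) (α l)).re := by
        rw [Complex.re_sum]
        gcongr with j
        exact hterm j
    _ ≤ 2 * ∑ l, ‖c l‖ * ‖∑ j, (boolSign (ε j) : ℂ) * expFreq (f j) (α l)‖ := by
        rw [hswap]
        gcongr
        refine (Complex.re_le_norm _).trans ((norm_sum_le _ _).trans_eq ?_)
        simp_rw [norm_mul]
    _ ≤ 2 * ∑ _l : Fin m, C * B := by
        gcongr with l
        exacts [(norm_nonneg _).trans (hc l), hc l, hB l]
    _ = 2 * (m * (C * B)) := by rw [sum_const, card_univ, Fintype.card_fin, nsmul_eq_mul]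

theorem denser_than_lacunaries_not_I0 (r : ℕ → ℕ) (hr : DenserThanLacunaries r) :
    ¬ IsI0Set (Set.range r) := by
  intro hI0
  obtain ⟨m, C, x, K, hcyl⟩ := hI0.exists_cylinder_subset_signApproxSet hr.1.injective
  set δ : ℝ := 1 / (4 * (m * C + 1))
  have hδ : 0 < δ := by positivity
  obtain ⟨N, hN, hN1⟩ := ((hr.eventually_mul_lt_pow K (4 * (4 * π / δ + 2))
    (one_lt_exp_iff.2 (by positivity : 0 < δ ^ 2 / 32))).and (eventually_ge_atTop 1)).exists
  set W := Ico K (N + K)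
  have hW : Fintype.card W = N := by simp [W]
  obtain ⟨ε, hε⟩ := exists_signs_norm_sum_expFreq_le (ι := W) (fun i => r i) (D := r (N + K))
    (fun i => hr.1.monotone (mem_Ico.1 i.2).2.le) (hr.1.le_apply.trans' (by omega)) hδ
    (by rwa [hW])
  obtain ⟨c, α, hc, hα, happrox⟩ :=
    hcyl (a := fun i => if h : i ∈ W then ε ⟨i, h⟩ else x i)
    (PiNat.mem_cylinder_iff.2 fun i hi => dif_neg (by simp [W]; omega))
  have hcard := card_le_of_forall_norm_boolSign_sub_le ε (fun i => r i) c α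
    (fun l => (norm_le_pi_norm c l).trans hc) (fun l => hε _ ⟨hα.1 l, hα.2 l⟩)
    fun i => by simpa [dif_pos i.2] using happrox i
  rw [hW] at hcard
  have hN' : (1 : ℝ) ≤ N := by exact_mod_cast hN1
  have hmC : (0 : ℝ) ≤ m * C := by positivity
  have hsmall : 2 * (m * (C * δ)) < 1 := by
    simp only [δ]
    field_simp
    linarith
  nlinarith
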